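/- arXiv:2009.07371 — 2 statements merged into one kernel-verified Lean document; each statement's English description precedes it below -/
import Mathlib

section
/- Let H be a finite-dimensional complex Hilbert space and A = (A_x)_{x ∈ Ω_A}, B = (B_y)_{y ∈ Ω_B} observables on H. Then the Lüders instrument of the sequential product equals the composition of the Lüders instruments, i.e. (A_x ∘ B_y)^{1/2} ρ (A_x ∘ B_y)^{1/2} = B_y^{1/2} A_x^{1/2} ρ A_x^{1/2} B_y^{1/2} holds for all states ρ and all x ∈ Ω_A, y ∈ Ω_B, if and only if A_x B_y = B_y A_x for all x ∈ Ω_A, y ∈ Ω_B. -/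
open Matrix ComplexOrder

/-- Port: `Matrix.PosSemidef.sqrt` was removed from Mathlib; restored with its old definition. -/
noncomputable def Matrix.PosSemidef.sqrt {n : Type*} [Fintype n] [DecidableEq n]
    {A : Matrix n n ℂ} (hA : A.PosSemidef) : Matrix n n ℂ :=
  hA.1.eigenvectorUnitary.1 * diagonal ((↑) ∘ (√·) ∘ hA.1.eigenvalues) *
  (star hA.1.eigenvectorUnitary : Matrix n n ℂ)

/-- The sequential product `a ∘ b = a^{1/2} b a^{1/2}` of effects, where `a^{1/2}` is the
unique positive semidefinite square root of `a`. -/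
noncomputable def seqProd {n : Type*} [Fintype n] [DecidableEq n]
    {a : Matrix n n ℂ} (ha : a.PosSemidef) (b : Matrix n n ℂ) : Matrix n n ℂ :=
  ha.sqrt * b * ha.sqrt

theorem seqProd_posSemidef {n : Type*} [Fintype n] [DecidableEq n]
    {a : Matrix n n ℂ} (ha : a.PosSemidef) {b : Matrix n n ℂ} (hb : b.PosSemidef) :
    (seqProd ha b).PosSemidef := by
  have h := hb.mul_mul_conjTranspose_same ha.sqrt
  have hs : ha.sqrtᴴ = ha.sqrt := by
    simp [Matrix.PosSemidef.sqrt, Matrix.conjTranspose_mul, Matrix.diagonal_conjTranspose,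
      Matrix.star_eq_conjTranspose, mul_assoc]
    congr 3
    funext i
    simp
  rwa [hs] at h

/-! If `A` and `B` commute, so do `√A` and `√B`, and then `√B √A` is a positive square root of
`√A B √A`, hence equal to `√(A ∘ B)`.

Conversely, put `S = √(A ∘ B)` and `C = √B √A`. Density matrices span all matrices, so
`X ↦ S X S` and `X ↦ C X Cᴴ` agree everywhere; testing against matrix units gives
`S i j * S k l = C i j * conj (C l k)`, which forces `C = μ S`. As `tr C = tr (√A √B) = tr Cᴴ`,
the scalar `μ` is real, so `C` is Hermitian, which says exactly that `√A` and `√B` commute. -/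

open scoped MatrixOrder

namespace Matrix

variable {n : Type*} [Fintype n]

theorem isHermitian_of_eq_smul_posSemidef {S C : Matrix n n ℂ} {μ : ℂ} (hS : S.PosSemidef)
    (hC : C = μ • S) (htr : star C.trace = C.trace) : C.IsHermitian := by
  by_cases h0 : S.trace = 0
  · rw [hC, hS.trace_eq_zero_iff.mp h0, smul_zero]
    exact isHermitian_zero
  have hSr : star S.trace = S.trace := by rw [← trace_conjTranspose, hS.isHermitian.eq]
  have hμ : star μ = μ := by
    rw [hC, trace_smul, smul_eq_mul, star_mul', hSr] at htr
    exact mul_right_cancel₀ h0 htr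
  rw [hC]
  exact IsSelfAdjoint.smul hμ hS.isHermitian

variable [DecidableEq n]

theorem PosSemidef.sqrt_eq_cfcSqrt {A : Matrix n n ℂ} (hA : A.PosSemidef) :
    hA.sqrt = CFC.sqrt A := by
  rw [CFC.sqrt_eq_cfc, cfc_nnreal_eq_real _ A hA.nonneg, hA.1.cfc_eq]
  simp only [IsHermitian.cfc, Matrix.PosSemidef.sqrt, Unitary.conjStarAlgAut_apply]
  congr 3
  funext i
  simp [Real.coe_toNNReal', max_eq_left (hA.eigenvalues_nonneg i)]

theorem PosSemidef.posSemidef_sqrt {A : Matrix n n ℂ} (hA : A.PosSemidef) :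
    hA.sqrt.PosSemidef := by
  rw [hA.sqrt_eq_cfcSqrt]
  exact (CFC.sqrt_nonneg A).posSemidef

theorem PosSemidef.sqrt_mul_self {A : Matrix n n ℂ} (hA : A.PosSemidef) :
    hA.sqrt * hA.sqrt = A := by
  rw [hA.sqrt_eq_cfcSqrt]
  exact CFC.sqrt_mul_sqrt_self A hA.nonneg

theorem PosSemidef.commute_sqrt_left {A B : Matrix n n ℂ} (hA : A.PosSemidef)
    (h : Commute A B) : Commute hA.sqrt B := by
  rw [hA.sqrt_eq_cfcSqrt, CFC.sqrt_eq_cfc]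
  exact h.cfc_nnreal _

theorem PosSemidef.commute_sqrt_sqrt {A B : Matrix n n ℂ} (hA : A.PosSemidef)
    (hB : B.PosSemidef) (h : Commute A B) : Commute hA.sqrt hB.sqrt :=
  (hB.commute_sqrt_left (hA.commute_sqrt_left h).symm).symm

theorem span_posSemidef_trace_eq_one :
    Submodule.span ℂ {ρ : Matrix n n ℂ | ρ.PosSemidef ∧ ρ.trace = 1} = ⊤ := by
  rw [eq_top_iff, ← CStarAlgebra.span_nonneg, Submodule.span_le]
  intro X hX
  rw [Set.mem_ofPred_eq, nonneg_iff_posSemidef] at hX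
  by_cases h0 : X.trace = 0
  · rw [(hX.trace_eq_zero_iff).mp h0]
    exact zero_mem _
  · have hnorm : (X.trace⁻¹ • X).PosSemidef ∧ (X.trace⁻¹ • X).trace = 1 :=
      ⟨hX.smul (inv_nonneg.mpr hX.trace_nonneg),
        by rw [trace_smul, smul_eq_mul, inv_mul_cancel₀ h0]⟩
    rw [← smul_inv_smul₀ h0 X]
    exact Submodule.smul_mem _ _ (Submodule.subset_span hnorm)

theorem mul_mul_eq_of_forall_trace_eq_one {S T C D : Matrix n n ℂ}
    (h : ∀ ρ : Matrix n n ℂ, ρ.PosSemidef → ρ.trace = 1 → S * ρ * T = C * ρ * D)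
    (X : Matrix n n ℂ) : S * X * T = C * X * D := by
  have hmaps : (LinearMap.mulLeft ℂ S).comp (LinearMap.mulRight ℂ T)
      = (LinearMap.mulLeft ℂ C).comp (LinearMap.mulRight ℂ D) :=
    LinearMap.ext_on span_posSemidef_trace_eq_one fun ρ ⟨hρ, hρ1⟩ => by
      simpa [mul_assoc] using h ρ hρ hρ1
  simpa [mul_assoc] using LinearMap.congr_fun hmaps X

theorem mul_single_mul_apply (M N : Matrix n n ℂ) (i j k l : n) (c : ℂ) :
    (M * single j k c * N) i l = M i j * c * N k l := by
  simp [mul_apply, single_apply, ite_and, Finset.sum_ite_eq]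

theorem exists_eq_smul_of_forall_mul_mul_conjTranspose {S C : Matrix n n ℂ}
    (hS : S.IsHermitian) (h : ∀ X, S * X * S = C * X * Cᴴ) : ∃ μ : ℂ, C = μ • S := by
  by_cases hS0 : S = 0
  · have hCC : C * Cᴴ = 0 := by simpa [hS0] using (h 1).symm
    exact ⟨0, by rw [self_mul_conjTranspose_eq_zero.mp hCC, zero_smul]⟩
  have hent : ∀ i j k l, S i j * S k l = C i j * star (C l k) := fun i j k l => by
    simpa [mul_single_mul_apply] using congr_fun₂ (h (single j k 1)) i l
  obtain ⟨k, l, hkl⟩ : ∃ k l, S k l ≠ 0 := by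
    by_contra! h0
    exact hS0 (Matrix.ext h0)
  have hC : C l k ≠ 0 := by
    intro hC0
    have := hent l k k l
    rw [hC0, zero_mul, ← hS.apply l k, mul_eq_zero, star_eq_zero, or_self] at this
    exact hkl this
  refine ⟨S k l / star (C l k), Matrix.ext fun i j => ?_⟩
  rw [smul_apply, smul_eq_mul, div_mul_eq_mul_div, eq_div_iff (star_ne_zero.mpr hC),
    mul_comm (S k l), hent]

end Matrix

section

variable {n : Type*} [Fintype n] [DecidableEq n] {a b : Matrix n n ℂ}

theorem sqrt_seqProd_of_commute (ha : a.PosSemidef) (hb : b.PosSemidef) (h : Commute a b) :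
    (seqProd_posSemidef ha hb).sqrt = hb.sqrt * ha.sqrt := by
  have hPQ := ha.commute_sqrt_sqrt hb h
  rw [(seqProd_posSemidef ha hb).sqrt_eq_cfcSqrt]
  refine CFC.sqrt_unique ?_
    (hPQ.symm.mul_nonneg hb.posSemidef_sqrt.nonneg ha.posSemidef_sqrt.nonneg)
  calc hb.sqrt * ha.sqrt * (hb.sqrt * ha.sqrt) = ha.sqrt * hb.sqrt * (hb.sqrt * ha.sqrt) := by
        rw [hPQ.eq]
    _ = ha.sqrt * b * ha.sqrt := by simp only [← hb.sqrt_mul_self, mul_assoc]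

theorem commute_of_sqrt_seqProd_conj_eq (ha : a.PosSemidef) (hb : b.PosSemidef)
    (h : ∀ ρ : Matrix n n ℂ, ρ.PosSemidef → ρ.trace = 1 →
      (seqProd_posSemidef ha hb).sqrt * ρ * (seqProd_posSemidef ha hb).sqrt
        = hb.sqrt * ha.sqrt * ρ * ha.sqrt * hb.sqrt) :
    Commute a b := by
  have hP := ha.posSemidef_sqrt.isHermitian
  have hQ := hb.posSemidef_sqrt.isHermitian
  have hS := (seqProd_posSemidef ha hb).posSemidef_sqrt
  have hadj : (hb.sqrt * ha.sqrt)ᴴ = ha.sqrt * hb.sqrt := by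
    rw [conjTranspose_mul, hP.eq, hQ.eq]
  have hconj : ∀ X, (seqProd_posSemidef ha hb).sqrt * X * (seqProd_posSemidef ha hb).sqrt
      = hb.sqrt * ha.sqrt * X * (hb.sqrt * ha.sqrt)ᴴ :=
    mul_mul_eq_of_forall_trace_eq_one fun ρ hρ hρ1 => by
      rw [h ρ hρ hρ1, hadj]
      simp only [mul_assoc]
  obtain ⟨μ, hμ⟩ := exists_eq_smul_of_forall_mul_mul_conjTranspose hS.isHermitian hconj
  have hQP : (hb.sqrt * ha.sqrt).IsHermitian :=
    isHermitian_of_eq_smul_posSemidef hS hμ (by rw [← trace_conjTranspose, hadj, trace_mul_comm])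
  have hPQ : Commute ha.sqrt hb.sqrt := ((hQ.commute_iff hP).mpr hQP).symm
  rw [← ha.sqrt_mul_self, ← hb.sqrt_mul_self]
  exact (hPQ.mul_right hPQ).mul_left (hPQ.mul_right hPQ)

end

theorem stmt_4_general {n : Type*} [Fintype n] [DecidableEq n]
    {ΩA ΩB : Type*}
    (A : ΩA → Matrix n n ℂ) (B : ΩB → Matrix n n ℂ)
    (hApos : ∀ x, (A x).PosSemidef)
    (hBpos : ∀ y, (B y).PosSemidef) :
    (∀ (ρ : Matrix n n ℂ), ρ.PosSemidef → ρ.trace = 1 → ∀ x y,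
        (seqProd_posSemidef (hApos x) (hBpos y)).sqrt * ρ *
          (seqProd_posSemidef (hApos x) (hBpos y)).sqrt
        = (hBpos y).sqrt * (hApos x).sqrt * ρ * (hApos x).sqrt * (hBpos y).sqrt)
    ↔ (∀ x y, A x * B y = B y * A x) := by
  refine ⟨fun h x y => ?_, fun hcomm ρ _ _ x y => ?_⟩
  · exact commute_of_sqrt_seqProd_conj_eq (hApos x) (hBpos y) fun ρ hρ hρ1 => h ρ hρ hρ1 x y
  · rw [sqrt_seqProd_of_commute (hApos x) (hBpos y) (hcomm x y)]
    simp only [mul_assoc, ((hApos x).commute_sqrt_sqrt (hBpos y) (hcomm x y)).eq]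

/-- The Lüders instrument of the sequential product `A ∘ B` equals the
composition of the Lüders instruments of `A` and `B` if and only if `A` and `B` commute. -/
theorem stmt_4 {n : Type*} [Fintype n] [DecidableEq n]
    {ΩA ΩB : Type*} [Fintype ΩA] [Fintype ΩB]
    (A : ΩA → Matrix n n ℂ) (B : ΩB → Matrix n n ℂ)
    (hApos : ∀ x, (A x).PosSemidef) (hAle : ∀ x, (1 - A x).PosSemidef)
    (hAsum : ∑ x, A x = 1)
    (hBpos : ∀ y, (B y).PosSemidef) (hBle : ∀ y, (1 - B y).PosSemidef)
    (hBsum : ∑ y, B y = 1) :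
    (∀ (ρ : Matrix n n ℂ), ρ.PosSemidef → ρ.trace = 1 → ∀ x y,
        (seqProd_posSemidef (hApos x) (hBpos y)).sqrt * ρ *
          (seqProd_posSemidef (hApos x) (hBpos y)).sqrt
        = (hBpos y).sqrt * (hApos x).sqrt * ρ * (hApos x).sqrt * (hBpos y).sqrt)
    ↔ (∀ x y, A x * B y = B y * A x) :=
  stmt_4_general A B hApos hBpos
end

section
/- Let H = H1 ⊗ H2 with dim H1 = n1, dim H2 = n2, and let a be an effect on H. Then a = a^1 ⊗ a^2 if and only if a = 0 or a = 1. -/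
/-!
Write `b = a^1 = reduced₁ a`, `c = a^2 = reduced₂ a` and suppose `a = b ⊗ c` with `b, c ≠ 0`.
Taking the partial trace over the second factor gives `n₂ b = tr₂ a = (tr c) b`, so
`tr c = n₂ = tr 1`. On the other hand `1 - c = (1/n₁) tr₁ (1 - a)` is positive semidefinite because
`a ≤ 1`, and a positive semidefinite matrix of trace zero vanishes; hence `c = 1`, symmetrically
`b = 1`, and `a = 1`.
-/

open Matrix ComplexOrder Kronecker

/-- The partial trace over the second tensor factor. -/
noncomputable def ptrace2 {n₁ n₂ : Type*} [Fintype n₂] (a : Matrix (n₁ × n₂) (n₁ × n₂) ℂ) :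
    Matrix n₁ n₁ ℂ :=
  Matrix.of fun i j => ∑ k, a (i, k) (j, k)

/-- The partial trace over the first tensor factor. -/
noncomputable def ptrace1 {n₁ n₂ : Type*} [Fintype n₁] (a : Matrix (n₁ × n₂) (n₁ × n₂) ℂ) :
    Matrix n₂ n₂ ℂ :=
  Matrix.of fun i j => ∑ k, a (k, i) (k, j)

noncomputable def reduced₁ {n₁ n₂ : Type*} [Fintype n₂] (a : Matrix (n₁ × n₂) (n₁ × n₂) ℂ) :
    Matrix n₁ n₁ ℂ :=
  (Fintype.card n₂ : ℂ)⁻¹ • ptrace2 a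

noncomputable def reduced₂ {n₁ n₂ : Type*} [Fintype n₁] (a : Matrix (n₁ × n₂) (n₁ × n₂) ℂ) :
    Matrix n₂ n₂ ℂ :=
  (Fintype.card n₁ : ℂ)⁻¹ • ptrace1 a

namespace Matrix

theorem eq_one_of_posSemidef_one_sub_of_trace_eq_card {n : Type*} [Fintype n] [DecidableEq n]
    {c : Matrix n n ℂ} (hc : (1 - c).PosSemidef) (htr : c.trace = Fintype.card n) : c = 1 := by
  have : (1 - c).trace = 0 := by rw [trace_sub, trace_one, htr, sub_self]
  exact (sub_eq_zero.mp (hc.trace_eq_zero_iff.mp this)).symm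

end Matrix

section PartialTrace

variable {n₁ n₂ : Type*}

theorem ptrace2_eq_sum_submatrix [Fintype n₂] (a : Matrix (n₁ × n₂) (n₁ × n₂) ℂ) :
    ptrace2 a = ∑ k, a.submatrix (·, k) (·, k) := by
  ext i j
  simp [ptrace2, Matrix.sum_apply]

theorem ptrace1_eq_sum_submatrix [Fintype n₁] (a : Matrix (n₁ × n₂) (n₁ × n₂) ℂ) :
    ptrace1 a = ∑ k, a.submatrix (k, ·) (k, ·) := by
  ext i j
  simp [ptrace1, Matrix.sum_apply]

theorem Matrix.PosSemidef.ptrace2 [Fintype n₁] [Fintype n₂] {a : Matrix (n₁ × n₂) (n₁ × n₂) ℂ}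
    (ha : a.PosSemidef) : (ptrace2 a).PosSemidef := by
  rw [ptrace2_eq_sum_submatrix]
  exact posSemidef_sum _ fun k _ => ha.submatrix _

theorem Matrix.PosSemidef.ptrace1 [Fintype n₁] [Fintype n₂] {a : Matrix (n₁ × n₂) (n₁ × n₂) ℂ}
    (ha : a.PosSemidef) : (ptrace1 a).PosSemidef := by
  rw [ptrace1_eq_sum_submatrix]
  exact posSemidef_sum _ fun k _ => ha.submatrix _

theorem ptrace2_kronecker [Fintype n₂] (b : Matrix n₁ n₁ ℂ) (c : Matrix n₂ n₂ ℂ) :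
    ptrace2 (b ⊗ₖ c) = c.trace • b := by
  ext i j
  simp [ptrace2, trace, Finset.mul_sum, mul_comm]

theorem ptrace1_kronecker [Fintype n₁] (b : Matrix n₁ n₁ ℂ) (c : Matrix n₂ n₂ ℂ) :
    ptrace1 (b ⊗ₖ c) = b.trace • c := by
  ext i j
  simp [ptrace1, trace, Finset.sum_mul]

theorem ptrace2_one [Fintype n₂] [DecidableEq n₁] [DecidableEq n₂] :
    ptrace2 (1 : Matrix (n₁ × n₂) (n₁ × n₂) ℂ) = (Fintype.card n₂ : ℂ) • 1 := by
  ext i j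
  by_cases hij : i = j <;> simp [ptrace2, one_apply, hij]

theorem ptrace1_one [Fintype n₁] [DecidableEq n₁] [DecidableEq n₂] :
    ptrace1 (1 : Matrix (n₁ × n₂) (n₁ × n₂) ℂ) = (Fintype.card n₁ : ℂ) • 1 := by
  ext i j
  by_cases hij : i = j <;> simp [ptrace1, one_apply, hij]

theorem ptrace2_sub [Fintype n₂] (a b : Matrix (n₁ × n₂) (n₁ × n₂) ℂ) :
    ptrace2 (a - b) = ptrace2 a - ptrace2 b := by
  ext i j
  simp [ptrace2, Finset.sum_sub_distrib]

theorem ptrace1_sub [Fintype n₁] (a b : Matrix (n₁ × n₂) (n₁ × n₂) ℂ) :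
    ptrace1 (a - b) = ptrace1 a - ptrace1 b := by
  ext i j
  simp [ptrace1, Finset.sum_sub_distrib]

end PartialTrace

section Reduced

variable {n₁ n₂ : Type*}

theorem reduced₁_kronecker [Fintype n₂] (b : Matrix n₁ n₁ ℂ) (c : Matrix n₂ n₂ ℂ) :
    reduced₁ (b ⊗ₖ c) = ((Fintype.card n₂ : ℂ)⁻¹ * c.trace) • b := by
  rw [reduced₁, ptrace2_kronecker, smul_smul]

theorem reduced₂_kronecker [Fintype n₁] (b : Matrix n₁ n₁ ℂ) (c : Matrix n₂ n₂ ℂ) :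
    reduced₂ (b ⊗ₖ c) = ((Fintype.card n₁ : ℂ)⁻¹ * b.trace) • c := by
  rw [reduced₂, ptrace1_kronecker, smul_smul]

theorem reduced₁_one [Fintype n₂] [DecidableEq n₁] [DecidableEq n₂] [Nonempty n₂] :
    reduced₁ (1 : Matrix (n₁ × n₂) (n₁ × n₂) ℂ) = 1 := by
  rw [reduced₁, ptrace2_one, smul_smul, inv_mul_cancel₀ (by simp), one_smul]

theorem reduced₂_one [Fintype n₁] [DecidableEq n₁] [DecidableEq n₂] [Nonempty n₁] :
    reduced₂ (1 : Matrix (n₁ × n₂) (n₁ × n₂) ℂ) = 1 := by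
  rw [reduced₂, ptrace1_one, smul_smul, inv_mul_cancel₀ (by simp), one_smul]

theorem reduced₁_one_sub [Fintype n₂] [DecidableEq n₁] [DecidableEq n₂] [Nonempty n₂]
    (a : Matrix (n₁ × n₂) (n₁ × n₂) ℂ) : reduced₁ (1 - a) = 1 - reduced₁ a := by
  have h₁ := reduced₁_one (n₁ := n₁) (n₂ := n₂)
  simp only [reduced₁] at h₁ ⊢
  rw [ptrace2_sub, smul_sub, h₁]

theorem reduced₂_one_sub [Fintype n₁] [DecidableEq n₁] [DecidableEq n₂] [Nonempty n₁]
    (a : Matrix (n₁ × n₂) (n₁ × n₂) ℂ) : reduced₂ (1 - a) = 1 - reduced₂ a := by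
  have h₁ := reduced₂_one (n₁ := n₁) (n₂ := n₂)
  simp only [reduced₂] at h₁ ⊢
  rw [ptrace1_sub, smul_sub, h₁]

theorem Matrix.PosSemidef.reduced₁ [Fintype n₁] [Fintype n₂] {a : Matrix (n₁ × n₂) (n₁ × n₂) ℂ}
    (ha : a.PosSemidef) : (reduced₁ a).PosSemidef :=
  ha.ptrace2.smul (by positivity)

theorem Matrix.PosSemidef.reduced₂ [Fintype n₁] [Fintype n₂] {a : Matrix (n₁ × n₂) (n₁ × n₂) ℂ}
    (ha : a.PosSemidef) : (reduced₂ a).PosSemidef :=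
  ha.ptrace1.smul (by positivity)

end Reduced

section ProductEffect

variable {n₁ n₂ : Type*}

theorem trace_eq_card_of_eq_reduced₁_kronecker [Fintype n₂] {a : Matrix (n₁ × n₂) (n₁ × n₂) ℂ}
    {c : Matrix n₂ n₂ ℂ} (h : a = reduced₁ a ⊗ₖ c) (hb : reduced₁ a ≠ 0) :
    c.trace = Fintype.card n₂ := by
  have hfix : ((Fintype.card n₂ : ℂ)⁻¹ * c.trace) • reduced₁ a = reduced₁ a := by
    rw [← reduced₁_kronecker, ← h]
  have hone : (Fintype.card n₂ : ℂ)⁻¹ * c.trace = 1 := by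
    have : ((Fintype.card n₂ : ℂ)⁻¹ * c.trace - 1) • reduced₁ a = 0 := by
      rw [sub_smul, one_smul, hfix, sub_self]
    exact sub_eq_zero.mp ((smul_eq_zero.mp this).resolve_right hb)
  simpa using eq_inv_of_mul_eq_one_right hone

theorem trace_eq_card_of_eq_kronecker_reduced₂ [Fintype n₁] {a : Matrix (n₁ × n₂) (n₁ × n₂) ℂ}
    {b : Matrix n₁ n₁ ℂ} (h : a = b ⊗ₖ reduced₂ a) (hc : reduced₂ a ≠ 0) :
    b.trace = Fintype.card n₁ := by
  have hfix : ((Fintype.card n₁ : ℂ)⁻¹ * b.trace) • reduced₂ a = reduced₂ a := by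
    rw [← reduced₂_kronecker, ← h]
  have hone : (Fintype.card n₁ : ℂ)⁻¹ * b.trace = 1 := by
    have : ((Fintype.card n₁ : ℂ)⁻¹ * b.trace - 1) • reduced₂ a = 0 := by
      rw [sub_smul, one_smul, hfix, sub_self]
    exact sub_eq_zero.mp ((smul_eq_zero.mp this).resolve_right hc)
  simpa using eq_inv_of_mul_eq_one_right hone

variable [Fintype n₁] [Fintype n₂] [DecidableEq n₁] [DecidableEq n₂]

theorem reduced₂_eq_one_of_eq_kronecker {a : Matrix (n₁ × n₂) (n₁ × n₂) ℂ}
    (hle : (1 - a).PosSemidef) (h : a = reduced₁ a ⊗ₖ reduced₂ a) (hb : reduced₁ a ≠ 0) :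
    reduced₂ a = 1 := by
  have : Nonempty n₁ := by
    rcases isEmpty_or_nonempty n₁ with _ | hn
    exacts [absurd (Subsingleton.elim _ _) hb, hn]
  refine eq_one_of_posSemidef_one_sub_of_trace_eq_card ?_
    (trace_eq_card_of_eq_reduced₁_kronecker h hb)
  rw [← reduced₂_one_sub]
  exact hle.reduced₂

theorem reduced₁_eq_one_of_eq_kronecker {a : Matrix (n₁ × n₂) (n₁ × n₂) ℂ}
    (hle : (1 - a).PosSemidef) (h : a = reduced₁ a ⊗ₖ reduced₂ a) (hc : reduced₂ a ≠ 0) :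
    reduced₁ a = 1 := by
  have : Nonempty n₂ := by
    rcases isEmpty_or_nonempty n₂ with _ | hn
    exacts [absurd (Subsingleton.elim _ _) hc, hn]
  refine eq_one_of_posSemidef_one_sub_of_trace_eq_card ?_
    (trace_eq_card_of_eq_kronecker_reduced₂ h hc)
  rw [← reduced₁_one_sub]
  exact hle.reduced₁

theorem reduced₁_kronecker_reduced₂_one :
    reduced₁ (1 : Matrix (n₁ × n₂) (n₁ × n₂) ℂ) ⊗ₖ reduced₂ (1 : Matrix (n₁ × n₂) (n₁ × n₂) ℂ)
      = 1 := by
  rcases isEmpty_or_nonempty n₁ with _ | _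
  · exact Subsingleton.elim _ _
  rcases isEmpty_or_nonempty n₂ with _ | _
  · exact Subsingleton.elim _ _
  rw [reduced₁_one, reduced₂_one, one_kronecker_one]

end ProductEffect

theorem stmt_8_general {n₁ n₂ : Type*} [Fintype n₁] [Fintype n₂] [DecidableEq n₁] [DecidableEq n₂]
    (a : Matrix (n₁ × n₂) (n₁ × n₂) ℂ)
    (hle : (1 - a).PosSemidef) :
    a = ((Fintype.card n₂ : ℂ)⁻¹ • ptrace2 a) ⊗ₖ ((Fintype.card n₁ : ℂ)⁻¹ • ptrace1 a)
      ↔ a = 0 ∨ a = 1 := by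
  change a = reduced₁ a ⊗ₖ reduced₂ a ↔ a = 0 ∨ a = 1
  constructor
  · intro h
    by_cases hb : reduced₁ a = 0
    · exact .inl (by rw [h, hb, zero_kronecker])
    by_cases hc : reduced₂ a = 0
    · exact .inl (by rw [h, hc, kronecker_zero])
    refine .inr ?_
    rw [h, reduced₁_eq_one_of_eq_kronecker hle h hc, reduced₂_eq_one_of_eq_kronecker hle h hb,
      one_kronecker_one]
  · rintro (rfl | rfl)
    · rw [show reduced₁ (0 : Matrix (n₁ × n₂) (n₁ × n₂) ℂ) = 0 by ext; simp [reduced₁, ptrace2],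
        zero_kronecker]
    · exact reduced₁_kronecker_reduced₂_one.symm

/-- For an effect `a` on `H1 ⊗ H2`, one has `a = a^1 ⊗ a^2` if and only if
`a = 0` or `a = 1`, where `a^1 = (1/n2)·tr_2 a` and `a^2 = (1/n1)·tr_1 a` are the reduced
effects. -/
theorem stmt_8 {n₁ n₂ : Type*} [Fintype n₁] [Fintype n₂] [DecidableEq n₁] [DecidableEq n₂]
    (a : Matrix (n₁ × n₂) (n₁ × n₂) ℂ)
    (hpos : a.PosSemidef) (hle : (1 - a).PosSemidef) :
    a = ((Fintype.card n₂ : ℂ)⁻¹ • ptrace2 a) ⊗ₖ ((Fintype.card n₁ : ℂ)⁻¹ • ptrace1 a)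
      ↔ a = 0 ∨ a = 1 :=
  stmt_8_general a hle
end
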